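/- Let A(z) = −3/(4(1−z)²) for z in the open unit disc 𝔻 (A is analytic on 𝔻). Then every non-trivial solution of f'' + A f = 0 has at most one zero in 𝔻, and |A(x)|(1−x²)² → 3 as x → 1⁻ along the real axis. -/

import Mathlib

/-!
The equation `f'' = 3 / (4 (1 - z)²) f` is of Euler type, with the solutions `(1 - z)^(3/2)` and
`(1 - z)^(-1/2)`. The Wronskians `a`, `b` of a solution `f` with these two are constant on `𝔻`, and
eliminating `f'` gives `2 √(1 - z) f = b (1 - z)² - a`. Hence `b ≠ 0` unless `f ≡ 0`, and every
zero of `f` satisfies `(1 - z)² = a / b`; of the two square roots of `a / b` at most one has positive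
real part, as `1 - z` does on `𝔻`. The limit is the computation `|A(x)| (1 - x²)² = 3 (1 + x)² / 4`.
-/

open Complex Metric Filter Topology

section Wronskian

variable {𝕜 : Type*} [NontriviallyNormedField 𝕜]

def SolvesOn (q y y' : 𝕜 → 𝕜) (s : Set 𝕜) : Prop :=
  ∀ z ∈ s, HasDerivAt y (y' z) z ∧ HasDerivAt y' (q z * y z) z

theorem SolvesOn.mono {q y y' : 𝕜 → 𝕜} {s t : Set 𝕜} (h : SolvesOn q y y' s) (hts : t ⊆ s) :
    SolvesOn q y y' t :=
  fun z hz => h z (hts hz)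

theorem solvesOn_deriv_of_analyticOnNhd [CompleteSpace 𝕜] {q f : 𝕜 → 𝕜} {s : Set 𝕜}
    (hf : AnalyticOnNhd 𝕜 f s) (hode : ∀ z ∈ s, deriv (deriv f) z = q z * f z) :
    SolvesOn q f (deriv f) s := fun z hz =>
  ⟨(hf z hz).differentiableAt.hasDerivAt,
    hode z hz ▸ (hf.deriv z hz).differentiableAt.hasDerivAt⟩

theorem hasDerivAt_wronskian {q f f' g g' : 𝕜 → 𝕜} {z : 𝕜}
    (hf : HasDerivAt f (f' z) z) (hf' : HasDerivAt f' (q z * f z) z)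
    (hg : HasDerivAt g (g' z) z) (hg' : HasDerivAt g' (q z * g z) z) :
    HasDerivAt (fun w => f w * g' w - f' w * g w) 0 z :=
  ((hf.fun_mul hg').fun_sub (hf'.fun_mul hg)).congr_deriv (by ring)

end Wronskian

theorem SolvesOn.exists_wronskian_eq_const {𝕜 : Type*} [RCLike 𝕜] {q f f' g g' : 𝕜 → 𝕜}
    {s : Set 𝕜} (hs : IsOpen s) (hs' : IsPreconnected s) (hf : SolvesOn q f f' s)
    (hg : SolvesOn q g g' s) :
    ∃ c, ∀ z ∈ s, f z * g' z - f' z * g z = c := by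
  have hW z (hz : z ∈ s) := hasDerivAt_wronskian (hf z hz).1 (hf z hz).2 (hg z hz).1 (hg z hz).2
  exact hs.exists_is_const_of_deriv_eq_zero hs'
    (fun z hz => (hW z hz).differentiableAt.differentiableWithinAt)
    fun z hz => (hW z hz).deriv

noncomputable def sqrtOneSub (z : ℂ) : ℂ := (1 - z) ^ (2⁻¹ : ℂ)

theorem sqrtOneSub_sq (z : ℂ) : sqrtOneSub z ^ 2 = 1 - z := by
  simp [sqrtOneSub]

theorem sqrtOneSub_ne_zero {z : ℂ} (hz : z ≠ 1) : sqrtOneSub z ≠ 0 := by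
  intro h
  have := sqrtOneSub_sq z
  rw [h, zero_pow two_ne_zero, eq_comm, sub_eq_zero] at this
  exact hz this.symm

theorem hasDerivAt_sqrtOneSub {z : ℂ} (hz : 1 - z ∈ slitPlane) :
    HasDerivAt sqrtOneSub (-(2 * sqrtOneSub z)⁻¹) z := by
  have hne : sqrtOneSub z ≠ 0 := sqrtOneSub_ne_zero (by rintro rfl; simp at hz)
  refine (((hasDerivAt_id z).const_sub 1).cpow_const (c := 2⁻¹) hz).congr_deriv ?_
  rw [id, cpow_sub _ _ (slitPlane_ne_zero hz), cpow_one]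
  change 2⁻¹ * (sqrtOneSub z / (1 - z)) * -1 = _
  rw [← sqrtOneSub_sq z]
  field_simp

/-- `-A`, so that the equation reads `f'' = eulerCoeff * f`. -/
noncomputable def eulerCoeff (z : ℂ) : ℂ := 3 / (4 * (1 - z) ^ 2)

def oneSubSlitPlane : Set ℂ := {z | 1 - z ∈ slitPlane}

theorem solvesOn_sqrtOneSub_pow_three :
    SolvesOn eulerCoeff (fun z => sqrtOneSub z ^ 3) (fun z => -(3 / 2) * sqrtOneSub z)
      oneSubSlitPlane := by
  intro z hz
  have hne : sqrtOneSub z ≠ 0 := sqrtOneSub_ne_zero (by rintro rfl; simp [oneSubSlitPlane] at hz)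
  have hs := hasDerivAt_sqrtOneSub hz
  refine ⟨(hs.fun_pow 3).congr_deriv ?_, (hs.const_mul _).congr_deriv ?_⟩
  · field_simp
    ring
  · rw [eulerCoeff, ← sqrtOneSub_sq z]
    field_simp
    ring

theorem solvesOn_sqrtOneSub_inv :
    SolvesOn eulerCoeff (fun z => (sqrtOneSub z)⁻¹) (fun z => (2 * sqrtOneSub z ^ 3)⁻¹)
      oneSubSlitPlane := by
  intro z hz
  have hne : sqrtOneSub z ≠ 0 := sqrtOneSub_ne_zero (by rintro rfl; simp [oneSubSlitPlane] at hz)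
  have hs := hasDerivAt_sqrtOneSub hz
  refine ⟨(hs.inv hne).congr_deriv ?_,
    (((hs.fun_pow 3).const_mul 2).inv (by simp [hne])).congr_deriv ?_⟩
  · field_simp
  · rw [eulerCoeff, ← sqrtOneSub_sq z]
    field_simp
    ring

theorem ball_subset_oneSubSlitPlane : ball (0 : ℂ) 1 ⊆ oneSubSlitPlane := fun z hz => by
  simpa [oneSubSlitPlane, sub_eq_add_neg] using
    mem_slitPlane_of_norm_lt_one (z := -z) (by simpa using hz)

theorem re_lt_one_of_mem_ball {z : ℂ} (hz : z ∈ ball (0 : ℂ) 1) : z.re < 1 :=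
  (re_le_norm z).trans_lt (mem_ball_zero_iff.mp hz)

theorem SolvesOn.exists_two_mul_sqrtOneSub_mul_eq {f f' : ℂ → ℂ}
    (hf : SolvesOn eulerCoeff f f' (ball 0 1)) :
    ∃ a b : ℂ, ∀ z ∈ ball (0 : ℂ) 1, 2 * sqrtOneSub z * f z = b * (1 - z) ^ 2 - a := by
  obtain ⟨a, ha⟩ := hf.exists_wronskian_eq_const isOpen_ball (convex_ball 0 1).isPreconnected
    (solvesOn_sqrtOneSub_pow_three.mono ball_subset_oneSubSlitPlane)
  obtain ⟨b, hb⟩ := hf.exists_wronskian_eq_const isOpen_ball (convex_ball 0 1).isPreconnected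
    (solvesOn_sqrtOneSub_inv.mono ball_subset_oneSubSlitPlane)
  refine ⟨a, b, fun z hz => ?_⟩
  have hne : sqrtOneSub z ≠ 0 := sqrtOneSub_ne_zero (by rintro rfl; simp at hz)
  rw [← ha z hz, ← hb z hz, ← sqrtOneSub_sq z]
  field_simp
  ring

theorem eq_of_one_sub_sq_eq {z₁ z₂ : ℂ} (h₁ : z₁.re < 1) (h₂ : z₂.re < 1)
    (h : (1 - z₁) ^ 2 = (1 - z₂) ^ 2) : z₁ = z₂ := by
  have : (z₂ - z₁) * (2 - z₁ - z₂) = 0 := by linear_combination h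
  rcases mul_eq_zero.mp this with h | h
  · linear_combination -h
  · have := congrArg re h
    simp only [sub_re, re_ofNat, zero_re] at this
    linarith

theorem tendsto_norm_mul_one_sub_sq_sq {A : ℂ → ℂ}
    (hA : ∀ z ∈ ball (0 : ℂ) 1, A z = -3 / (4 * (1 - z) ^ 2)) :
    Tendsto (fun x : ℝ => ‖A x‖ * (1 - x ^ 2) ^ 2) (𝓝[<] 1) (𝓝 3) := by
  have hlim : Tendsto (fun x : ℝ => 3 * (1 + x) ^ 2 / 4) (𝓝[<] 1) (𝓝 3) :=
    tendsto_nhdsWithin_of_tendsto_nhds <|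
      (by fun_prop : Continuous fun x : ℝ => 3 * (1 + x) ^ 2 / 4).tendsto' 1 3 (by norm_num)
  refine hlim.congr' ?_
  filter_upwards [Ioo_mem_nhdsLT (show (-1 : ℝ) < 1 by norm_num)] with x hx
  have hx' : (x : ℂ) ∈ ball (0 : ℂ) 1 := by simpa [abs_lt] using hx
  have hx1 : 1 - x ≠ 0 := by linarith [hx.2]
  rw [hA x hx',
    show -3 / (4 * (1 - (x : ℂ)) ^ 2) = ((-3 / (4 * (1 - x) ^ 2) : ℝ) : ℂ) by push_cast; rfl,
    norm_real, Real.norm_eq_abs, abs_div, abs_of_pos (by positivity : 0 < 4 * (1 - x) ^ 2)]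
  field_simp
  norm_num
  ring

theorem stmt_13 (A : ℂ → ℂ) (hA : ∀ z ∈ ball (0:ℂ) 1, A z = -3 / (4 * (1 - z) ^ 2)) :
    (∀ f : ℂ → ℂ, AnalyticOnNhd ℂ f (ball (0:ℂ) 1) →
      (∀ z ∈ ball (0:ℂ) 1, deriv (deriv f) z + A z * f z = 0) →
      ¬ (∀ z ∈ ball (0:ℂ) 1, f z = 0) →
      ∀ z₁ ∈ ball (0:ℂ) 1, ∀ z₂ ∈ ball (0:ℂ) 1, f z₁ = 0 → f z₂ = 0 → z₁ = z₂) ∧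
    Tendsto (fun x : ℝ => ‖A (x : ℂ)‖ * (1 - x ^ 2) ^ 2)
      (𝓝[<] (1:ℝ)) (𝓝 3) := by
  refine ⟨fun f hf hode hnt z₁ hz₁ z₂ hz₂ hf₁ hf₂ => ?_, tendsto_norm_mul_one_sub_sq_sq hA⟩
  have hsol : SolvesOn eulerCoeff f (deriv f) (ball 0 1) :=
    solvesOn_deriv_of_analyticOnNhd hf fun z hz => by
      rw [eulerCoeff, ← neg_neg (deriv (deriv f) z), eq_neg_of_add_eq_zero_left (hode z hz), hA z hz]
      ring
  obtain ⟨a, b, hab⟩ := hsol.exists_two_mul_sqrtOneSub_mul_eq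
  have hzero : ∀ z ∈ ball (0 : ℂ) 1, f z = 0 → b * (1 - z) ^ 2 = a := fun z hz h0 => by
    simpa [h0, sub_eq_zero] using (hab z hz).symm
  have hb : b ≠ 0 := by
    rintro rfl
    have ha : a = 0 := by simpa using (hzero z₁ hz₁ hf₁).symm
    refine hnt fun z hz => ?_
    have hne : sqrtOneSub z ≠ 0 := sqrtOneSub_ne_zero (by rintro rfl; simp at hz)
    simpa [ha, hne] using hab z hz
  exact eq_of_one_sub_sq_eq (re_lt_one_of_mem_ball hz₁) (re_lt_one_of_mem_ball hz₂)
    (mul_left_cancel₀ hb ((hzero z₁ hz₁ hf₁).trans (hzero z₂ hz₂ hf₂).symm))
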